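/- Let A be a connected locally finite graph whose universal covering tree T is a self-similar tree, and let Ā be a minimal covering quotient of T. If π, π' : A → Ā are two covering morphisms, then π₀ = π'₀, i.e. π and π' agree on vertices (but not necessarily on edges). -/

import Mathlib

/-- A rooted directed multigraph. -/
structure RGraph where
  V : Type
  E : Type
  s : E → V
  t : E → V
  root : V

namespace RGraph

/-- `l` is a path: consecutive edges are composable. -/
def IsPath (A : RGraph) (l : List A.E) : Prop :=
  l.Chain' (fun e f => A.t e = A.s f)

/-- `l` is a path starting at the vertex `q`. -/
def PathFrom (A : RGraph) (q : A.V) (l : List A.E) : Prop :=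
  A.IsPath l ∧ ∀ e ∈ l.head?, A.s e = q

/-- The target of the path `l` started at `q` (equal to `q` for the empty path). -/
def pathTarget (A : RGraph) (q : A.V) (l : List A.E) : A.V :=
  l.foldl (fun _ e => A.t e) q

@[simp] lemma pathTarget_nil (A : RGraph) (q : A.V) : A.pathTarget q [] = q := rfl

@[simp] lemma pathTarget_cons (A : RGraph) (q : A.V) (a : A.E) (l : List A.E) :
    A.pathTarget q (a :: l) = A.pathTarget (A.t a) l := rfl

lemma pathTarget_append (A : RGraph) (q : A.V) (l l' : List A.E) :
    A.pathTarget q (l ++ l') = A.pathTarget (A.pathTarget q l) l' := by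
  simp [pathTarget]

@[simp] lemma pathTarget_append_single (A : RGraph) (q : A.V) (l : List A.E) (e : A.E) :
    A.pathTarget q (l ++ [e]) = A.t e := by
  rw [pathTarget_append]; rfl

lemma pathFrom_nil (A : RGraph) (q : A.V) : A.PathFrom q [] :=
  ⟨List.isChain_nil, by simp⟩

lemma pathTarget_getLast {A : RGraph} {q : A.V} {l : List A.E} {x : A.E}
    (hx : x ∈ l.getLast?) : A.pathTarget q l = A.t x := by
  induction l generalizing q with
  | nil => simp at hx
  | cons a l ih =>
    cases l with
    | nil => simp at hx; subst hx; rfl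
    | cons b l =>
      rw [List.getLast?_cons_cons] at hx
      simpa using ih (q := A.t a) hx

lemma pathFrom_append_single {A : RGraph} {q : A.V} {l : List A.E} {e : A.E}
    (h : A.PathFrom q l) (he : A.s e = A.pathTarget q l) :
    A.PathFrom q (l ++ [e]) := by
  constructor
  · apply List.isChain_append.mpr
    refine ⟨h.1, List.isChain_singleton _, ?_⟩
    intro x hx y hy
    simp at hy
    subst hy
    rw [he]
    exact (pathTarget_getLast hx).symm
  · intro f hf
    cases l with
    | nil =>
      simp at hf
      subst hf
      simpa using he
    | cons a l =>
      simp at hf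
      subst hf
      exact h.2 a (by simp)

/-- `w` is reachable from `q` by an oriented path. -/
def Reach (A : RGraph) (q w : A.V) : Prop :=
  ∃ l, A.PathFrom q l ∧ A.pathTarget q l = w

lemma reach_self (A : RGraph) (q : A.V) : A.Reach q q :=
  ⟨[], A.pathFrom_nil q, rfl⟩

lemma reach_target {A : RGraph} {q : A.V} {e : A.E} (h : A.Reach q (A.s e)) :
    A.Reach q (A.t e) := by
  obtain ⟨l, hl, ht⟩ := h
  exact ⟨l ++ [e], pathFrom_append_single hl ht.symm, by simp⟩

/-- A graph is connected (as a rooted directed graph) if every vertex is reachable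
from the root. -/
def Connected (A : RGraph) : Prop := ∀ w : A.V, A.Reach A.root w

/-- A graph is a tree if the target map from paths emanating from the root to
vertices is a bijection. -/
def IsTree (A : RGraph) : Prop :=
  Function.Bijective
    (fun l : {l : List A.E // A.PathFrom A.root l} => A.pathTarget A.root l.1)

/-- A graph is locally finite if every vertex has finitely many outgoing edges. -/
def LocallyFinite (A : RGraph) : Prop := ∀ q : A.V, Finite {e : A.E // A.s e = q}

/-- Adjacency: there is an edge from `v` to `w`. -/
def Adj (A : RGraph) (v w : A.V) : Prop := ∃ e, A.s e = v ∧ A.t e = w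

/-- The induced rooted subgraph on all vertices reachable from `q` (the "cone" at `q`). -/
def subgraph (A : RGraph) (q : A.V) : RGraph where
  V := {w // A.Reach q w}
  E := {e // A.Reach q (A.s e)}
  s := fun e => ⟨A.s e.1, e.2⟩
  t := fun e => ⟨A.t e.1, reach_target e.2⟩
  root := ⟨q, A.reach_self q⟩

/-- The truncation of the cone at `v` to vertices at distance at most `d` from `v`. -/
def trunc (A : RGraph) (v : A.V) (d : ℕ) : RGraph where
  V := {w // ∃ l, A.PathFrom v l ∧ A.pathTarget v l = w ∧ l.length ≤ d}
  E := {e // ∃ l, A.PathFrom v l ∧ A.pathTarget v l = A.s e ∧ l.length < d}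
  s := fun e => ⟨A.s e.1, e.2.imp fun _ h => ⟨h.1, h.2.1, h.2.2.le⟩⟩
  t := fun e => ⟨A.t e.1, by
    obtain ⟨l, h1, h2, h3⟩ := e.2
    exact ⟨l ++ [e.1], pathFrom_append_single h1 h2.symm, by simp,
      by simp only [List.length_append, List.length_singleton]; omega⟩⟩
  root := ⟨v, [], A.pathFrom_nil v, rfl, Nat.zero_le d⟩

/-- The universal covering tree of `A`: vertices are the paths emanating from the root. -/
def cover (A : RGraph) : RGraph where
  V := {l : List A.E // A.PathFrom A.root l}
  E := {x : {l : List A.E // A.PathFrom A.root l} × A.E //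
          A.s x.2 = A.pathTarget A.root x.1.1}
  s := fun x => x.1.1
  t := fun x => ⟨x.1.1.1 ++ [x.1.2], pathFrom_append_single x.1.1.2 x.2⟩
  root := ⟨[], A.pathFrom_nil _⟩

end RGraph

/-- A morphism of rooted directed multigraphs. -/
structure GraphHom (A B : RGraph) where
  v : A.V → B.V
  e : A.E → B.E
  root_eq : v A.root = B.root
  s_eq : ∀ x, B.s (e x) = v (A.s x)
  t_eq : ∀ x, B.t (e x) = v (A.t x)

namespace GraphHom

variable {A B : RGraph}

/-- The unique path lifting property. -/
def UPLP (p : GraphHom A B) : Prop :=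
  ∀ (q : A.V) (l' : List B.E), B.PathFrom (p.v q) l' →
    ∃! l : List A.E, A.PathFrom q l ∧ l.map p.e = l'

/-- A covering morphism: surjective on vertices, with the unique path lifting property. -/
def IsCovering (p : GraphHom A B) : Prop := Function.Surjective p.v ∧ p.UPLP

/-- An isomorphism of graphs: bijective on vertices and on edges. -/
def IsIso (p : GraphHom A B) : Prop := Function.Bijective p.v ∧ Function.Bijective p.e

/-- The restriction of the edge map to the edges emanating from `q`. -/
def outMap (p : GraphHom A B) (q : A.V) :
    {e : A.E // A.s e = q} → {e' : B.E // B.s e' = p.v q} :=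
  fun e => ⟨p.e e.1, by rw [p.s_eq, e.2]⟩

lemma isPath_map (p : GraphHom A B) {l : List A.E} (h : A.IsPath l) :
    B.IsPath (l.map p.e) := by
  rw [RGraph.IsPath, List.Chain', List.isChain_map]
  exact List.IsChain.imp (fun a b hab => by rw [p.t_eq, p.s_eq, hab]) h

lemma pathFrom_map (p : GraphHom A B) {q : A.V} {l : List A.E} (h : A.PathFrom q l) :
    B.PathFrom (p.v q) (l.map p.e) := by
  refine ⟨p.isPath_map h.1, ?_⟩
  intro f hf
  cases l with
  | nil => simp at hf
  | cons a l =>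
    simp at hf
    subst hf
    rw [p.s_eq, h.2 a (by simp)]

lemma pathTarget_map (p : GraphHom A B) (q : A.V) (l : List A.E) :
    B.pathTarget (p.v q) (l.map p.e) = p.v (A.pathTarget q l) := by
  induction l generalizing q with
  | nil => rfl
  | cons a l ih =>
    show B.pathTarget (B.t (p.e a)) (l.map p.e) = _
    rw [p.t_eq]
    exact ih (A.t a)

lemma reach_map (p : GraphHom A B) {q w : A.V} (h : A.Reach q w) :
    B.Reach (p.v q) (p.v w) := by
  obtain ⟨l, hl, ht⟩ := h
  exact ⟨l.map p.e, p.pathFrom_map hl, by rw [p.pathTarget_map, ht]⟩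

end GraphHom

/-- Two graphs are isomorphic. -/
def RGraph.Iso (A B : RGraph) : Prop := ∃ p : GraphHom A B, p.IsIso

/-- The universal covering morphism from the universal covering tree of `A` to `A`. -/
def RGraph.uCover (A : RGraph) : GraphHom A.cover A where
  v := fun l => A.pathTarget A.root l.1
  e := fun x => x.1.2
  root_eq := rfl
  s_eq := fun x => x.2
  t_eq := fun x => by
    show A.t x.1.2 = A.pathTarget A.root (x.1.1.1 ++ [x.1.2])
    simp

/-- The morphism induced between universal covering trees by a morphism of graphs. -/
def GraphHom.coverMap {A B : RGraph} (p : GraphHom A B) : GraphHom A.cover B.cover where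
  v := fun l => ⟨l.1.map p.e, by have := p.pathFrom_map l.2; rwa [p.root_eq] at this⟩
  e := fun x =>
    ⟨(⟨x.1.1.1.map p.e, by have := p.pathFrom_map x.1.1.2; rwa [p.root_eq] at this⟩,
      p.e x.1.2), by
        show B.s (p.e x.1.2) = B.pathTarget B.root (x.1.1.1.map p.e)
        rw [p.s_eq, x.2, ← p.root_eq, p.pathTarget_map]⟩
  root_eq := Subtype.ext rfl
  s_eq := fun _ => rfl
  t_eq := fun x => by
    apply Subtype.ext
    simp [RGraph.cover]

/-- `A` is a covering quotient of `T`. -/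
def IsCovQuotient (T A : RGraph) : Prop := ∃ p : GraphHom T A, p.IsCovering

/-- `A` is a minimal covering quotient of `T`: a covering quotient with the minimal
number of vertices among all covering quotients of `T`. -/
def IsMinCovQuotient (T A : RGraph) : Prop :=
  IsCovQuotient T A ∧
    ∀ B : RGraph, IsCovQuotient T B → Cardinal.mk A.V ≤ Cardinal.mk B.V

/-- `T` has finitely many cone types. -/
def FinManyCones (T : RGraph) : Prop :=
  ∃ S : Set T.V, S.Finite ∧ ∀ v : T.V, ∃ w ∈ S, RGraph.Iso (T.subgraph v) (T.subgraph w)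

/-- A self-similar tree: a locally finite tree with finitely many cone types. -/
def SelfSimilarTree (T : RGraph) : Prop := T.IsTree ∧ T.LocallyFinite ∧ FinManyCones T

namespace RGraph

/-- The automorphism group of a graph, realized as the group of root-preserving,
adjacency-preserving permutations of the vertex set (for trees this is the same as the
automorphism group in the sense of graph morphisms, since in a tree an edge is determined
by its endpoints). -/
def autGroup (T : RGraph) : Subgroup (Equiv.Perm T.V) where
  carrier := {g | g T.root = T.root ∧ ∀ v w, T.Adj v w ↔ T.Adj (g v) (g w)}
  one_mem' := ⟨rfl, fun _ _ => Iff.rfl⟩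
  mul_mem' := by
    rintro a b ⟨ha1, ha2⟩ ⟨hb1, hb2⟩
    refine ⟨?_, fun v w => ?_⟩
    · show a (b T.root) = T.root
      rw [hb1, ha1]
    · exact (hb2 v w).trans (ha2 (b v) (b w))
  inv_mem' := by
    rintro a ⟨ha1, ha2⟩
    refine ⟨?_, fun v w => ?_⟩
    · show a.symm T.root = T.root
      rw [Equiv.symm_apply_eq]
      exact ha1.symm
    · have h := ha2 (a⁻¹ v) (a⁻¹ w)
      simpa using h.symm

/-- The subgroup of permutations of the vertices fixing every vertex outside
of the cone at `v`. -/
def fixOutside (T : RGraph) (v : T.V) : Subgroup (Equiv.Perm T.V) where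
  carrier := {g | ∀ w, ¬ T.Reach v w → g w = w}
  one_mem' := fun _ _ => rfl
  mul_mem' := by
    intro a b ha hb w hw
    show a (b w) = w
    rw [hb w hw, ha w hw]
  inv_mem' := by
    intro a ha w hw
    show a.symm w = w
    rw [Equiv.symm_apply_eq]
    exact (ha w hw).symm

/-- The rigid stabilizer of the vertex `v`: automorphisms fixing every vertex
outside the subtree spanned by `v` and its descendants. -/
def rist (T : RGraph) (v : T.V) : Subgroup (Equiv.Perm T.V) :=
  T.autGroup ⊓ T.fixOutside v

/-- The set of vertices at distance `n` from the root. -/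
def level (T : RGraph) (n : ℕ) : Set T.V :=
  {v | ∃ l : List T.E, T.PathFrom T.root l ∧ T.pathTarget T.root l = v ∧ l.length = n}

/-- The `n`-th rigid level stabilizer: the subgroup generated by the rigid stabilizers
of the vertices at distance `n` from the root. -/
def ristLevel (T : RGraph) (n : ℕ) : Subgroup (Equiv.Perm T.V) :=
  ⨆ v ∈ T.level n, T.rist v

/-- The `n`-th rigid level stabilizer, as a subgroup of the automorphism group. -/
def ristIn (T : RGraph) (n : ℕ) : Subgroup ↥T.autGroup :=
  (T.ristLevel n).comap T.autGroup.subtype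

end RGraph

/-- A recurrent double edge: a pair of distinct parallel edges such that there is an
oriented loop which contains one of them, or from which their common source can be
reached. -/
def HasRecDoubleEdge (A : RGraph) : Prop :=
  ∃ e₁ e₂ : A.E, e₁ ≠ e₂ ∧ A.s e₁ = A.s e₂ ∧ A.t e₁ = A.t e₂ ∧
    ((∃ (q : A.V) (l : List A.E),
        A.PathFrom q l ∧ l ≠ [] ∧ A.pathTarget q l = q ∧ (e₁ ∈ l ∨ e₂ ∈ l)) ∨
     (∃ (q : A.V) (l : List A.E),
        A.PathFrom q l ∧ l ≠ [] ∧ A.pathTarget q l = q ∧ A.Reach q (A.s e₁)))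

/-- A deterministic finite automaton over the alphabet `A`, with a partial transition
function, a single initial state, and all states accepting. -/
structure PDFA (A : Type) where
  Q : Type
  finQ : Finite Q
  neQ : Nonempty Q
  δ : Q → A → Option Q
  init : Q

namespace PDFA

variable {A : Type} (M : PDFA A)

/-- Running the automaton from state `q` on a word; `none` if it gets stuck. -/
def run : M.Q → List A → Option M.Q
  | q, [] => some q
  | q, a :: w => (M.δ q a).bind fun q' => run q' w

/-- The regular language accepted by `M`. -/
def Lang : Set (List A) := {w | (M.run M.init w).isSome}

lemma run_append (q : M.Q) (u w : List A) :
    M.run q (u ++ w) = (M.run q u).bind fun q' => M.run q' w := by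
  induction u generalizing q with
  | nil => simp [run]
  | cons a u ih =>
    simp only [List.cons_append, run]
    cases M.δ q a with
    | none => simp
    | some q' => simp [ih]

lemma isSome_of_append {q : M.Q} {u w : List A}
    (h : (M.run q (u ++ w)).isSome) : (M.run q u).isSome := by
  rw [run_append] at h
  cases hu : M.run q u with
  | none => rw [hu] at h; simp at h
  | some q' => simp

/-- The path language tree of `M`: the tree whose vertices are the words of the
language of `M`, with an edge from `w` to `w ++ [a]` whenever both belong to the
language. -/
def pathTree : RGraph where
  V := {w : List A // (M.run M.init w).isSome}
  E := {x : List A × A // (M.run M.init (x.1 ++ [x.2])).isSome}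
  s := fun x => ⟨x.1.1, M.isSome_of_append x.2⟩
  t := fun x => ⟨x.1.1 ++ [x.1.2], x.2⟩
  root := ⟨[], by simp [run]⟩

/-- The underlying rooted directed multigraph of the automaton `M`. -/
def underlying : RGraph where
  V := M.Q
  E := {x : M.Q × A // (M.δ x.1 x.2).isSome}
  s := fun x => x.1.1
  t := fun x => (M.δ x.1.1 x.1.2).get x.2
  root := M.init

/-- `M` is geometrically minimal: it has the minimal number of states among all DFAs
(over arbitrary finite nonempty alphabets) whose path language trees are isomorphic,
as unlabelled rooted trees, to the path language tree of `M`. -/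
def GeomMinimal : Prop :=
  ∀ (B : Type), Finite B → Nonempty B → ∀ N : PDFA B,
    RGraph.Iso M.pathTree N.pathTree → Nat.card M.Q ≤ Nat.card N.Q

/-- The state reached after reading the word `w` of the language. -/
def qstate (w : List A) (h : (M.run M.init w).isSome) : M.Q :=
  (M.run M.init w).get h

/-- The group of admissible permutations at the state `q`: permutations `τ` of the
alphabet fixing the letters outside `Σ(q)` and satisfying `δ(q, τ a) = δ(q, a)`. -/
def SymQ (q : M.Q) : Subgroup (Equiv.Perm A) where
  carrier := {τ | ∀ a, M.δ q (τ a) = M.δ q a ∧ (M.δ q a = none → τ a = a)}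
  one_mem' := fun _ => ⟨rfl, fun _ => rfl⟩
  mul_mem' := by
    intro τ₁ τ₂ h1 h2 a
    constructor
    · show M.δ q (τ₁ (τ₂ a)) = M.δ q a
      rw [(h1 (τ₂ a)).1, (h2 a).1]
    · intro hn
      show τ₁ (τ₂ a) = a
      rw [(h2 a).2 hn, (h1 a).2 hn]
  inv_mem' := by
    intro τ h a
    have h1 := (h (τ.symm a)).1
    rw [Equiv.apply_symm_apply] at h1
    constructor
    · show M.δ q (τ.symm a) = M.δ q a
      exact h1.symm
    · intro hn
      have h2 := (h (τ.symm a)).2 (h1.symm.trans hn)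
      rw [Equiv.apply_symm_apply] at h2
      show τ.symm a = a
      exact h2.symm

end PDFA

/-- Extending a portrait to a map on words (the first argument is the accumulated
prefix): the `i`-th letter of the image word is the image of the `i`-th letter under
the local injection at the prefix of length `i - 1`. -/
def portraitExtend {A : Type} (σ : List A → A → A) : List A → List A → List A
  | _, [] => []
  | pre, a :: w => σ pre a :: portraitExtend σ (pre ++ [a]) w

/-! The relation `π x ~ π' x` between vertices of `Ā` is a bisimulation, because both maps
are bijective on the out-edges of every vertex. Quotienting a graph by the equivalence
generated by a bisimulation gives a graph that it covers, so `Ā / ~` is again a covering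
quotient of the tree; minimality forces `|Ā| ≤ |Ā / ~|`, and when `Ā` is finite this means
that `~` is trivial. Finiteness of `Ā` comes from the same construction applied to the
bisimulation "the cones at `v` and `w` are isomorphic" on the tree, whose quotient has one
vertex per cone type. -/

def Equiv.restrictSubtype {α β : Type*} {p : α → Prop} {q : β → Prop}
    (e : Subtype p ≃ Subtype q) (P : α → Prop) (Q : β → Prop) (hP : ∀ {a}, P a → p a)
    (hQ : ∀ {b}, Q b → q b) (h : ∀ x, P x.1 ↔ Q (e x).1) : {a // P a} ≃ {b // Q b} :=
  (Equiv.subtypeSubtypeEquivSubtype hP).symm.trans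
    ((e.subtypeEquiv h).trans (Equiv.subtypeSubtypeEquivSubtype hQ))

namespace RGraph

variable {A : RGraph}

lemma pathFrom_cons_iff {q : A.V} {e : A.E} {l : List A.E} :
    A.PathFrom q (e :: l) ↔ A.s e = q ∧ A.PathFrom (A.t e) l := by
  rw [PathFrom, PathFrom, IsPath, IsPath, List.Chain', List.Chain', List.isChain_cons]
  simp only [List.head?_cons, Option.mem_def, Option.some.injEq, forall_eq', eq_comm (a := A.t e)]
  tauto

lemma pathFrom_singleton {q : A.V} {e : A.E} : A.PathFrom q [e] ↔ A.s e = q := by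
  simp [pathFrom_cons_iff, pathFrom_nil]

lemma Reach.induction {q : A.V} {P : A.V → Prop} (h₀ : P q)
    (hstep : ∀ e, A.Reach q (A.s e) → P (A.s e) → P (A.t e)) {w : A.V}
    (hw : A.Reach q w) : P w := by
  obtain ⟨l, hl, rfl⟩ := hw
  suffices ∀ u, A.Reach q u → P u → A.PathFrom u l → P (A.pathTarget u l) from
    this q (A.reach_self q) h₀ hl
  clear hl
  induction l with
  | nil => exact fun u _ hu _ => hu
  | cons e l ih =>
    rintro u hqu hu hpath
    obtain ⟨hs, htail⟩ := pathFrom_cons_iff.1 hpath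
    subst hs
    exact ih _ (reach_target hqu) (hstep e hqu hu) htail

lemma reach_trans {q w u : A.V} (h₁ : A.Reach q w) (h₂ : A.Reach w u) : A.Reach q u :=
  Reach.induction h₁ (fun _ _ => reach_target) h₂

lemma reach_subgraph_iff {v : A.V} {x y : (A.subgraph v).V} :
    (A.subgraph v).Reach x y ↔ A.Reach x.1 y.1 := by
  constructor
  · exact Reach.induction (P := fun y : (A.subgraph v).V => A.Reach x.1 y.1) (A.reach_self _)
      (fun _ _ => reach_target)
  · obtain ⟨y, hy⟩ := y
    intro h
    refine Reach.induction (P := fun u => ∀ hu, (A.subgraph v).Reach x ⟨u, hu⟩)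
      (fun _ => (A.subgraph v).reach_self x) (fun e hxe ih _ => ?_) h hy
    have hve : A.Reach v (A.s e) := reach_trans x.2 hxe
    exact (A.subgraph v).reach_target (e := ⟨e, hve⟩) (ih hve)

end RGraph

namespace GraphHom

variable {A B C : RGraph}

def comp (p : GraphHom B C) (q : GraphHom A B) : GraphHom A C where
  v := p.v ∘ q.v
  e := p.e ∘ q.e
  root_eq := by simp [q.root_eq, p.root_eq]
  s_eq x := by simp [p.s_eq, q.s_eq]
  t_eq x := by simp [p.t_eq, q.t_eq]

def LocBij (p : GraphHom A B) : Prop := ∀ q : A.V, Function.Bijective (p.outMap q)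

lemma exists_lift (p : GraphHom A B) (hp : ∀ q, Function.Surjective (p.outMap q))
    {q : A.V} {l' : List B.E} (h : B.PathFrom (p.v q) l') :
    ∃ l : List A.E, A.PathFrom q l ∧ l.map p.e = l' := by
  induction l' generalizing q with
  | nil => exact ⟨[], A.pathFrom_nil q, rfl⟩
  | cons e' l' ih =>
    obtain ⟨hse', hl'⟩ := RGraph.pathFrom_cons_iff.1 h
    obtain ⟨⟨e, hse⟩, hee'⟩ := hp q ⟨e', hse'⟩
    obtain rfl : p.e e = e' := congrArg Subtype.val hee'
    obtain ⟨l, hl, rfl⟩ := ih (q := A.t e) (by rwa [← p.t_eq])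
    exact ⟨e :: l, RGraph.pathFrom_cons_iff.2 ⟨hse, hl⟩, rfl⟩

lemma lift_unique (p : GraphHom A B) (hp : ∀ q, Function.Injective (p.outMap q))
    {q : A.V} {l₁ l₂ : List A.E} (h₁ : A.PathFrom q l₁) (h₂ : A.PathFrom q l₂)
    (h : l₁.map p.e = l₂.map p.e) : l₁ = l₂ := by
  induction l₁ generalizing q l₂ with
  | nil => simpa [eq_comm] using h
  | cons e₁ l₁ ih =>
    obtain _ | ⟨e₂, l₂⟩ := l₂
    · simp at h
    obtain ⟨hs₁, h₁⟩ := RGraph.pathFrom_cons_iff.1 h₁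
    obtain ⟨hs₂, h₂⟩ := RGraph.pathFrom_cons_iff.1 h₂
    obtain ⟨he, hl⟩ := List.cons_eq_cons.1 h
    obtain rfl : e₁ = e₂ :=
      congrArg Subtype.val (hp q (a₁ := ⟨e₁, hs₁⟩) (a₂ := ⟨e₂, hs₂⟩) (Subtype.ext he))
    rw [ih h₁ h₂ hl]

lemma LocBij.uplp {p : GraphHom A B} (hp : p.LocBij) : p.UPLP := fun _ _ hl' => by
  obtain ⟨l, hl, hmap⟩ := p.exists_lift (fun q => (hp q).2) hl'
  exact ⟨l, ⟨hl, hmap⟩, fun l₂ ⟨hl₂, hmap₂⟩ =>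
    p.lift_unique (fun q => (hp q).1) hl₂ hl (hmap₂.trans hmap.symm)⟩

lemma UPLP.locBij {p : GraphHom A B} (hp : p.UPLP) : p.LocBij := by
  refine fun q => ⟨fun ⟨e₁, h₁⟩ ⟨e₂, h₂⟩ he => ?_, fun ⟨e', he'⟩ => ?_⟩
  · have hpe : p.e e₁ = p.e e₂ := congrArg Subtype.val he
    have hpath : B.PathFrom (p.v q) [p.e e₁] := RGraph.pathFrom_singleton.2 (by rw [p.s_eq, h₁])
    have h := (hp q _ hpath).unique (y₁ := [e₁]) (y₂ := [e₂])
      ⟨RGraph.pathFrom_singleton.2 h₁, rfl⟩ ⟨RGraph.pathFrom_singleton.2 h₂, by simp [hpe]⟩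
    exact Subtype.ext (List.singleton_inj.1 h)
  · obtain ⟨l, ⟨hl, hmap⟩, -⟩ := hp q [e'] (RGraph.pathFrom_singleton.2 he')
    obtain ⟨e, rfl, rfl⟩ := List.map_eq_singleton_iff.1 hmap
    exact ⟨⟨e, RGraph.pathFrom_singleton.1 hl⟩, rfl⟩

lemma isCovering_iff {p : GraphHom A B} :
    p.IsCovering ↔ Function.Surjective p.v ∧ p.LocBij :=
  and_congr_right' ⟨UPLP.locBij, LocBij.uplp⟩

lemma IsCovering.comp {p : GraphHom B C} {q : GraphHom A B}
    (hp : p.IsCovering) (hq : q.IsCovering) : (p.comp q).IsCovering := by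
  rw [isCovering_iff] at *
  refine ⟨hp.1.comp hq.1, fun a => ?_⟩
  exact (hp.2 (q.v a)).comp (hq.2 a)

lemma IsIso.reach_iff {p : GraphHom A B} (hp : p.IsIso) {x y : A.V} :
    B.Reach (p.v x) (p.v y) ↔ A.Reach x y := by
  refine ⟨fun h => ?_, p.reach_map⟩
  refine RGraph.Reach.induction (P := fun z => ∀ y, p.v y = z → A.Reach x y)
    (fun y hy => hp.1.1 hy ▸ A.reach_self x) (fun e' _ ih y hy => ?_) h y rfl
  obtain ⟨e, rfl⟩ := hp.2.2 e'
  rw [p.t_eq] at hy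
  exact hp.1.1 hy ▸ A.reach_target (ih _ (p.s_eq e).symm)

end GraphHom

lemma IsCovQuotient.trans {T A B : RGraph} (hA : IsCovQuotient T A) {p : GraphHom A B}
    (hp : p.IsCovering) : IsCovQuotient T B :=
  let ⟨f, hf⟩ := hA
  ⟨p.comp f, hp.comp hf⟩

def IsBisim (B : RGraph) (R : B.V → B.V → Prop) : Prop :=
  ∀ ⦃b b' : B.V⦄, R b b' →
    ∃ σ : {e : B.E // B.s e = b} ≃ {e : B.E // B.s e = b'}, ∀ e, R (B.t e.1) (B.t (σ e).1)

lemma IsBisim.eqvGen {B : RGraph} {R : B.V → B.V → Prop} (h : IsBisim B R) :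
    IsBisim B (Relation.EqvGen R) := by
  intro b b' hbb'
  induction hbb' with
  | rel _ _ hR =>
    obtain ⟨σ, hσ⟩ := h hR
    exact ⟨σ, fun e => .rel _ _ (hσ e)⟩
  | refl => exact ⟨Equiv.refl _, fun _ => .refl _⟩
  | symm _ _ _ ih =>
    obtain ⟨σ, hσ⟩ := ih
    exact ⟨σ.symm, fun e => .symm _ _ (by simpa using hσ (σ.symm e))⟩
  | trans _ _ _ _ _ ih₁ ih₂ =>
    obtain ⟨σ₁, hσ₁⟩ := ih₁
    obtain ⟨σ₂, hσ₂⟩ := ih₂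
    exact ⟨σ₁.trans σ₂, fun e => .trans _ _ _ (hσ₁ e) (hσ₂ (σ₁ e))⟩

section QuotGraph

variable {B : RGraph} (st : Setoid B.V)

/-- The out-edges of a class are the out-edges of its chosen representative. -/
noncomputable def quotGraph : RGraph where
  V := Quotient st
  E := {e : B.E // B.s e = (Quotient.mk st (B.s e)).out}
  s e := Quotient.mk st (B.s e.1)
  t e := Quotient.mk st (B.t e.1)
  root := Quotient.mk st B.root

def quotGraphOutEquiv (c : Quotient st) :
    {e : B.E // B.s e = c.out} ≃ {e : (quotGraph st).E // (quotGraph st).s e = c} where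
  toFun e := ⟨⟨e.1, by rw [e.2, Quotient.out_eq]⟩,
    show Quotient.mk st (B.s e.1) = c by rw [e.2, Quotient.out_eq]⟩
  invFun e := ⟨e.1.1, by
    rw [e.1.2]
    exact congrArg Quotient.out (e.2 : Quotient.mk st (B.s e.1.1) = c)⟩
  left_inv _ := rfl
  right_inv _ := rfl

variable {st} (h : IsBisim B st.r)

noncomputable def bisimOutEquiv (b : B.V) :
    {e : B.E // B.s e = b} ≃ {e : B.E // B.s e = (Quotient.mk st b).out} :=
  (h (Setoid.symm (Quotient.mk_out b))).choose

lemma bisimOutEquiv_rel (b : B.V) (e : {e : B.E // B.s e = b}) :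
    st.r (B.t e.1) (B.t (bisimOutEquiv h b e).1) :=
  (h (Setoid.symm (Quotient.mk_out b))).choose_spec e

noncomputable def quotHom : GraphHom B (quotGraph st) where
  v := Quotient.mk st
  e x := ⟨(bisimOutEquiv h (B.s x) ⟨x, rfl⟩).1, by
    rw [(bisimOutEquiv h (B.s x) ⟨x, rfl⟩).2, Quotient.out_eq]⟩
  root_eq := rfl
  s_eq x := by
    show Quotient.mk st (B.s _) = _
    rw [(bisimOutEquiv h (B.s x) ⟨x, rfl⟩).2, Quotient.out_eq]
  t_eq x := Quotient.sound (Setoid.symm (bisimOutEquiv_rel h (B.s x) ⟨x, rfl⟩))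

lemma quotHom_outMap (b : B.V) :
    (quotHom h).outMap b = quotGraphOutEquiv st _ ∘ bisimOutEquiv h b := by
  funext ⟨x, hx⟩
  subst hx
  rfl

lemma quotHom_isCovering : (quotHom h).IsCovering := by
  refine GraphHom.isCovering_iff.2 ⟨Quotient.mk_surjective, fun b => ?_⟩
  rw [quotHom_outMap]
  exact (Equiv.bijective _).comp (Equiv.bijective _)

end QuotGraph

lemma IsCovQuotient.quotGraph {T B : RGraph} (hB : IsCovQuotient T B) {st : Setoid B.V}
    (h : IsBisim B st.r) : IsCovQuotient T (quotGraph st) :=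
  hB.trans (quotHom_isCovering h)

section Cones

variable {B : RGraph}

lemma iso_subgraph_of_iso {v w a b : B.V} {Φ : GraphHom (B.subgraph v) (B.subgraph w)}
    (hΦ : Φ.IsIso) (ha : B.Reach v a) (hb : B.Reach w b) (hab : Φ.v ⟨a, ha⟩ = ⟨b, hb⟩) :
    RGraph.Iso (B.subgraph a) (B.subgraph b) := by
  have hV (u : (B.subgraph v).V) : B.Reach a u.1 ↔ B.Reach b (Φ.v u).1 :=
    calc B.Reach a u.1 ↔ (B.subgraph v).Reach ⟨a, ha⟩ u :=
        (RGraph.reach_subgraph_iff (x := ⟨a, ha⟩) (y := u)).symm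
      _ ↔ (B.subgraph w).Reach (Φ.v ⟨a, ha⟩) (Φ.v u) := hΦ.reach_iff.symm
      _ ↔ B.Reach b (Φ.v u).1 := by rw [hab]; exact RGraph.reach_subgraph_iff
  have hE (x : (B.subgraph v).E) : B.Reach a (B.s x.1) ↔ B.Reach b (B.s (Φ.e x).1) := by
    rw [show B.s (Φ.e x).1 = _ from congrArg Subtype.val (Φ.s_eq x)]
    exact hV ((B.subgraph v).s x)
  let eV := (Equiv.ofBijective _ hΦ.1).restrictSubtype _ _ (RGraph.reach_trans ha)
    (RGraph.reach_trans hb) hV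
  let eE := (Equiv.ofBijective _ hΦ.2).restrictSubtype _ _ (RGraph.reach_trans ha)
    (RGraph.reach_trans hb) hE
  refine ⟨⟨eV, eE, ?_, fun x => ?_, fun x => ?_⟩, eV.bijective, eE.bijective⟩
  · exact Subtype.ext (congrArg Subtype.val hab :)
  · exact Subtype.ext (congrArg Subtype.val (Φ.s_eq _) :)
  · exact Subtype.ext (congrArg Subtype.val (Φ.t_eq _) :)

lemma isBisim_iso_subgraph (B : RGraph) :
    IsBisim B fun v w => RGraph.Iso (B.subgraph v) (B.subgraph w) := by
  rintro v w ⟨Φ, hΦ⟩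
  have hroot (x : (B.subgraph v).E) : B.s x.1 = v ↔ B.s (Φ.e x).1 = w :=
    calc B.s x.1 = v ↔ (B.subgraph v).s x = (B.subgraph v).root :=
        (Subtype.ext_iff (a1 := (B.subgraph v).s x) (a2 := (B.subgraph v).root)).symm
      _ ↔ Φ.v ((B.subgraph v).s x) = (B.subgraph w).root := by
        rw [← Φ.root_eq, hΦ.1.1.eq_iff]
      _ ↔ B.s (Φ.e x).1 = w := by rw [← Φ.s_eq]; exact Subtype.ext_iff
  let σ := (Equiv.ofBijective _ hΦ.2).restrictSubtype (B.s · = v) (B.s · = w)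
    (fun he => he ▸ B.reach_self v) (fun he => he ▸ B.reach_self w) hroot
  refine ⟨σ, fun e => ?_⟩
  have hve : B.Reach v (B.s e.1) := by rw [e.2]; exact B.reach_self v
  have hwe : B.Reach w (B.s (σ e).1) := by rw [(σ e).2]; exact B.reach_self w
  exact iso_subgraph_of_iso hΦ (B.reach_target hve) (B.reach_target hwe)
    (Subtype.ext (congrArg Subtype.val (Φ.t_eq ⟨e.1, hve⟩) :).symm)

end Cones

lemma FinManyCones.exists_finite_covQuotient {T : RGraph} (h : FinManyCones T) :
    ∃ B : RGraph, IsCovQuotient T B ∧ Finite B.V := by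
  obtain ⟨S, hS, hcone⟩ := h
  have hst := (isBisim_iso_subgraph T).eqvGen
  refine ⟨quotGraph (Relation.EqvGen.setoid _), ⟨quotHom hst, quotHom_isCovering hst⟩, ?_⟩
  have := hS.to_subtype
  refine Finite.of_surjective (fun w : S => Quotient.mk _ w.1) fun c => ?_
  obtain ⟨v, rfl⟩ := Quotient.mk_surjective c
  obtain ⟨w, hw, hvw⟩ := hcone v
  exact ⟨⟨w, hw⟩, Quotient.sound (.symm _ _ (.rel _ _ hvw))⟩

lemma IsMinCovQuotient.finite_of_isCovQuotient {T A B : RGraph} (hA : IsMinCovQuotient T A)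
    (hB : IsCovQuotient T B) [Finite B.V] : Finite A.V := by
  obtain ⟨emb⟩ := hA.2 B hB
  exact Finite.of_injective emb emb.injective

lemma IsMinCovQuotient.eq_of_isBisim {T A : RGraph} (hA : IsMinCovQuotient T A) [Finite A.V]
    {R : A.V → A.V → Prop} (hR : IsBisim A R) {a b : A.V} (hab : R a b) : a = b := by
  let st := Relation.EqvGen.setoid R
  obtain ⟨emb⟩ := hA.2 _ (hA.1.quotGraph (st := st) hR.eqvGen)
  have hinj : Function.Injective (Quotient.mk st) :=
    (Quotient.mk_surjective.bijective_of_nat_card_le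
      (Nat.card_le_card_of_injective emb emb.injective)).1
  exact hinj (Quotient.sound (.rel _ _ hab))

lemma isBisim_pair_of_locBij {T C : RGraph} {f g : GraphHom T C} (hf : f.LocBij) (hg : g.LocBij) :
    IsBisim C fun b b' => ∃ x : T.V, f.v x = b ∧ g.v x = b' := by
  rintro _ _ ⟨x, rfl, rfl⟩
  let σf := Equiv.ofBijective _ (hf x)
  refine ⟨σf.symm.trans (Equiv.ofBijective _ (hg x)), fun e => ⟨T.t (σf.symm e).1, ?_, ?_⟩⟩
  · rw [← f.t_eq]
    exact congrArg (fun e' => C.t e'.1) (σf.apply_symm_apply e)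
  · exact (g.t_eq _).symm

theorem stmt10_general (A : RGraph)
    (hss : SelfSimilarTree A.cover) (Abar : RGraph)
    (hmin : IsMinCovQuotient A.cover Abar)
    (p p' : GraphHom A Abar) (hp : p.IsCovering) (hp' : p'.IsCovering) :
    p.v = p'.v := by
  obtain ⟨B, hB, _⟩ := hss.2.2.exists_finite_covQuotient
  have : Finite Abar.V := hmin.finite_of_isCovQuotient hB
  funext q
  exact hmin.eq_of_isBisim
    (isBisim_pair_of_locBij (GraphHom.isCovering_iff.1 hp).2 (GraphHom.isCovering_iff.1 hp').2)
    ⟨q, rfl, rfl⟩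

/-- Let `A` be a connected locally finite graph whose universal
covering tree is a self-similar tree, and let `Ā` be a minimal covering quotient of
this tree. Any two covering morphisms `π, π' : A → Ā` agree on vertices. -/
theorem stmt10 (A : RGraph) (hconn : A.Connected) (hlf : A.LocallyFinite)
    (hss : SelfSimilarTree A.cover) (Abar : RGraph)
    (hmin : IsMinCovQuotient A.cover Abar)
    (p p' : GraphHom A Abar) (hp : p.IsCovering) (hp' : p'.IsCovering) :
    p.v = p'.v :=
  stmt10_general A hss Abar hmin p p' hp hp'
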